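/- arXiv:2501.03679 — 2 statements merged into one kernel-verified Lean document; each statement's English description precedes it below -/
import Mathlib

section
/- For a prime p and integers m₂, m'₂ not divisible by p, the sum ∑*_{x mod p} S(x, m₂; p)·S(x, m'₂; p) satisfies the bound |∑*_{x mod p} S(x, m₂; p)·S(x, m'₂; p)| ≤ 2p² · [m₂ ≡ m'₂ mod p] + 2p. -/
/-- `e(x/q) = e^{2πix/q}` for `x` a residue mod `q`. -/
noncomputable def eZ (q : ℕ) (x : ZMod q) : ℂ :=
  Complex.exp (2 * Real.pi * Complex.I * (x.val : ℂ) / (q : ℂ))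

/-- The Kloosterman sum `S(a,b;q) = ∑*_{x mod q} e((ax + b x̄)/q)`. -/
noncomputable def Kl (q : ℕ) [NeZero q] (a b : ZMod q) : ℂ :=
  ∑ x : (ZMod q)ˣ, eZ q (a * (x : ZMod q) + b * ((x⁻¹ : (ZMod q)ˣ) : ZMod q))

lemma eZ_eq_stdAddChar (q : ℕ) [NeZero q] (x : ZMod q) :
    eZ q x = ZMod.stdAddChar x := by
  rw [ZMod.stdAddChar_apply, ZMod.toCircle_apply, eZ]

/-- Full sum of the standard character over all residues. -/
lemma sum_stdAddChar_mul (q : ℕ) [NeZero q] (t : ZMod q) :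
    ∑ i : ZMod q, ZMod.stdAddChar (t * i) = if t = 0 then (q : ℂ) else 0 := by
  split_ifs with h
  · simp only [h, zero_mul, AddChar.map_zero_eq_one, Finset.sum_const, Finset.card_univ,
      ZMod.card, nsmul_eq_mul, mul_one]
  · exact AddChar.sum_eq_zero_of_ne_one (ZMod.isPrimitive_stdAddChar q h)

/-- Sum over units equals sum over all residues minus the value at zero (p prime). -/
lemma sum_units_eq_sub (p : ℕ) [NeZero p] (hp : p.Prime) (g : ZMod p → ℂ) :
    ∑ x : (ZMod p)ˣ, g (x : ZMod p) = ∑ i : ZMod p, g i - g 0 := by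
  haveI := Fact.mk hp
  have e1 : ∑ x : (ZMod p)ˣ, g (x : ZMod p) = ∑ a : {a : ZMod p // a ≠ 0}, g a :=
    Fintype.sum_equiv unitsEquivNeZero _ _ (fun x => rfl)
  have e2 : ∑ a : {a : ZMod p // a ≠ 0}, g a
      = ∑ i ∈ Finset.univ.erase (0 : ZMod p), g i := by
    rw [← Finset.filter_ne']
    exact (Finset.sum_subtype _ (fun x => by simp) g).symm
  rw [e1, e2, eq_sub_iff_add_eq, Finset.sum_erase_add _ _ (Finset.mem_univ 0)]

/-- Sum of the standard character over units, for `p` prime. -/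
lemma sum_units_stdAddChar (p : ℕ) [NeZero p] (hp : p.Prime) (t : ZMod p) :
    ∑ x : (ZMod p)ˣ, ZMod.stdAddChar (t * (x : ZMod p)) =
      (if t = 0 then (p : ℂ) else 0) - 1 := by
  rw [sum_units_eq_sub p hp (fun i => ZMod.stdAddChar (t * i)), sum_stdAddChar_mul]
  simp

/-- Exact evaluation of the sum of products of Kloosterman sums. -/
lemma kl_product_sum (p : ℕ) [NeZero p] (hp : p.Prime) (a b : ZMod p)
    (ha : a ≠ 0) (hb : b ≠ 0) :
    ∑ x : (ZMod p)ˣ, Kl p (x : ZMod p) a * Kl p (x : ZMod p) b =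
      (if a = b then (p : ℂ) ^ 2 else 0) - (p : ℂ) - 1 := by
  haveI := Fact.mk hp
  set ψ := ZMod.stdAddChar (N := p) with hψdef
  have hKl : ∀ c d : ZMod p, Kl p c d =
      ∑ y : (ZMod p)ˣ, ψ (c * (y : ZMod p)) * ψ (d * ((y⁻¹ : (ZMod p)ˣ) : ZMod p)) := by
    intro c d
    refine Finset.sum_congr rfl fun y _ => ?_
    rw [eZ_eq_stdAddChar, AddChar.map_add_eq_mul]
  have hinv : ∀ (c : ZMod p),
      ∑ y : (ZMod p)ˣ, ψ (c * ((y⁻¹ : (ZMod p)ˣ) : ZMod p)) =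
        (if c = 0 then (p : ℂ) else 0) - 1 := by
    intro c
    rw [← sum_units_stdAddChar p hp c]
    exact Fintype.sum_equiv (Equiv.inv (ZMod p)ˣ) _ _ (fun y => rfl)
  have hcond : ∀ y z : (ZMod p)ˣ, ((y : ZMod p) + (z : ZMod p) = 0) = (z = -y) := by
    intro y z
    rw [eq_iff_iff, Units.ext_iff, Units.val_neg, add_comm, add_eq_zero_iff_eq_neg]
  calc ∑ x : (ZMod p)ˣ, Kl p (x : ZMod p) a * Kl p (x : ZMod p) b
      = ∑ x : (ZMod p)ˣ, ∑ y : (ZMod p)ˣ, ∑ z : (ZMod p)ˣ,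
          (ψ ((x : ZMod p) * y) * ψ (a * ((y⁻¹ : (ZMod p)ˣ) : ZMod p))) *
          (ψ ((x : ZMod p) * z) * ψ (b * ((z⁻¹ : (ZMod p)ˣ) : ZMod p))) := by
        simp_rw [hKl, Finset.sum_mul_sum]
    _ = ∑ y : (ZMod p)ˣ, ∑ z : (ZMod p)ˣ,
          (ψ (a * ((y⁻¹ : (ZMod p)ˣ) : ZMod p)) * ψ (b * ((z⁻¹ : (ZMod p)ˣ) : ZMod p))) *
          ∑ x : (ZMod p)ˣ, ψ (((y : ZMod p) + (z : ZMod p)) * (x : ZMod p)) := by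
        rw [Finset.sum_comm]
        refine Finset.sum_congr rfl fun y _ => ?_
        rw [Finset.sum_comm]
        refine Finset.sum_congr rfl fun z _ => ?_
        rw [Finset.mul_sum]
        refine Finset.sum_congr rfl fun x _ => ?_
        have harg : ((y : ZMod p) + (z : ZMod p)) * (x : ZMod p)
            = (x : ZMod p) * y + (x : ZMod p) * z := by ring
        rw [harg, AddChar.map_add_eq_mul]
        ring
    _ = ∑ y : (ZMod p)ˣ, ∑ z : (ZMod p)ˣ,
          (ψ (a * ((y⁻¹ : (ZMod p)ˣ) : ZMod p)) * ψ (b * ((z⁻¹ : (ZMod p)ˣ) : ZMod p))) *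
          ((if (y : ZMod p) + (z : ZMod p) = 0 then (p : ℂ) else 0) - 1) := by
        simp_rw [hψdef, sum_units_stdAddChar p hp]
    _ = (∑ y : (ZMod p)ˣ, ∑ z : (ZMod p)ˣ,
          (ψ (a * ((y⁻¹ : (ZMod p)ˣ) : ZMod p)) * ψ (b * ((z⁻¹ : (ZMod p)ˣ) : ZMod p))) *
          (if (y : ZMod p) + (z : ZMod p) = 0 then (p : ℂ) else 0))
        - (∑ y : (ZMod p)ˣ, ψ (a * ((y⁻¹ : (ZMod p)ˣ) : ZMod p))) *
          (∑ z : (ZMod p)ˣ, ψ (b * ((z⁻¹ : (ZMod p)ˣ) : ZMod p))) := by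
        rw [Finset.sum_mul_sum]
        simp_rw [mul_sub, mul_one, Finset.sum_sub_distrib]
    _ = (∑ y : (ZMod p)ˣ, (ψ (a * ((y⁻¹ : (ZMod p)ˣ) : ZMod p)) *
          ψ (b * (((-y)⁻¹ : (ZMod p)ˣ) : ZMod p))) * (p : ℂ))
        - ((if a = 0 then (p : ℂ) else 0) - 1) * ((if b = 0 then (p : ℂ) else 0) - 1) := by
        rw [hinv, hinv]
        congr 1
        refine Finset.sum_congr rfl fun y _ => ?_
        simp_rw [hcond, mul_ite, mul_zero, Finset.sum_ite_eq', Finset.mem_univ, if_true]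
    _ = ((if a - b = 0 then (p : ℂ) else 0) - 1) * (p : ℂ) - 1 := by
        rw [if_neg ha, if_neg hb]
        have hterm : ∀ y : (ZMod p)ˣ,
            ψ (a * ((y⁻¹ : (ZMod p)ˣ) : ZMod p)) * ψ (b * (((-y)⁻¹ : (ZMod p)ˣ) : ZMod p))
              = ψ ((a - b) * ((y⁻¹ : (ZMod p)ˣ) : ZMod p)) := by
          intro y
          rw [inv_neg, Units.val_neg, ← AddChar.map_add_eq_mul]
          congr 1; ring
        simp_rw [hterm]
        rw [← Finset.sum_mul, hinv]
        ring
    _ = (if a = b then (p : ℂ) ^ 2 else 0) - (p : ℂ) - 1 := by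
        by_cases hab : a = b
        · rw [if_pos (sub_eq_zero_of_eq hab), if_pos hab]; ring
        · rw [if_neg (fun h => hab (sub_eq_zero.mp h)), if_neg hab]; ring

/-- Bound for the sum over units x mod p of S(x,m₂;p)·S(x,m'₂;p) when p ∤ m₂m'₂. -/
theorem sum_kloosterman_product_bound (p : ℕ) [NeZero p] (hp : p.Prime) (m₂ m'₂ : ℤ)
    (h₂ : ¬ (p : ℤ) ∣ m₂) (h'₂ : ¬ (p : ℤ) ∣ m'₂) :
    ‖(∑ x : (ZMod p)ˣ,
        Kl p (x : ZMod p) (m₂ : ZMod p) * Kl p (x : ZMod p) (m'₂ : ZMod p))‖ ≤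
      2 * (p : ℝ) ^ 2 * (if (m₂ : ZMod p) = (m'₂ : ZMod p) then 1 else 0) + 2 * (p : ℝ) := by
  have ha : (m₂ : ZMod p) ≠ 0 := by
    rwa [Ne, ZMod.intCast_zmod_eq_zero_iff_dvd]
  have hb : (m'₂ : ZMod p) ≠ 0 := by
    rwa [Ne, ZMod.intCast_zmod_eq_zero_iff_dvd]
  rw [kl_product_sum p hp _ _ ha hb]
  have hp2 : (2 : ℝ) ≤ (p : ℝ) := by exact_mod_cast hp.two_le
  split_ifs with h
  · have he : ((p : ℂ) ^ 2 - (p : ℂ) - 1)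
        = (((p : ℝ) ^ 2 - (p : ℝ) - 1 : ℝ) : ℂ) := by push_cast; ring
    rw [he, Complex.norm_real, Real.norm_eq_abs, abs_of_nonneg (by nlinarith)]
    nlinarith
  · have he : ((0 : ℂ) - (p : ℂ) - 1) = ((-(p : ℝ) - 1 : ℝ) : ℂ) := by push_cast; ring
    rw [he, Complex.norm_real, Real.norm_eq_abs, abs_of_nonpos (by nlinarith)]
    nlinarith
end

section
/- Define, for a positive integer q dividing into coprime parts with compatible factorizations, the sum 𝔠(q) = ∑*_{a mod q} S(a, m₂; q/m₁) · S(a, m'₂; q/m₁) where m₁ | q. If q = q₁q₂ with gcd(q₁, q₂) = 1 and m₁ = m₁′m₁″ with gcd(m₁′, m₁″) = 1, m₁′ | q₁, m₁″ | q₂, then 𝔠(q₁q₂) = 𝔠(q₁) · 𝔠(q₂), where in 𝔠(q₁) the arguments m₂, m'₂ are twisted by \bar{(q₂/m₁″)}² mod q₁/m₁′ and symmetrically for 𝔠(q₂). -/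
open Complex Finset

/-- `𝔠(q) = ∑*_{a mod q} S(a, m₂; d) · S(a, m'₂; d)`, where `d = q/m₁`. -/
noncomputable def CS (q d : ℕ) [NeZero q] [NeZero d] (m₂ m'₂ : ZMod d) : ℂ :=
  ∑ a : (ZMod q)ˣ,
    Kl d (ZMod.cast ((a : ZMod q))) m₂ * Kl d (ZMod.cast ((a : ZMod q))) m'₂

/-- `E q n = e^{2πin/q}` for an integer `n`. -/
noncomputable def E (q : ℕ) (n : ℤ) : ℂ := Complex.exp (2 * Real.pi * Complex.I * (n : ℂ) / (q : ℂ))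

lemma E_congr {q : ℕ} [NeZero q] {m n : ℤ} (h : m ≡ n [ZMOD q]) : E q m = E q n := by
  obtain ⟨k, hk⟩ := h.dvd
  have hq : (q : ℂ) ≠ 0 := Nat.cast_ne_zero.2 (NeZero.ne q)
  have hn : (n : ℂ) = (m : ℂ) + (q : ℂ) * (k : ℂ) := by
    have : n = m + (q : ℤ) * k := by linarith
    exact_mod_cast congrArg (fun z : ℤ => (z : ℂ)) this
  unfold E
  rw [hn, show 2 * (Real.pi : ℂ) * Complex.I * ((m : ℂ) + (q : ℂ) * (k : ℂ)) / (q : ℂ)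
      = 2 * (Real.pi : ℂ) * Complex.I * (m : ℂ) / (q : ℂ) + (k : ℂ) * (2 * Real.pi * Complex.I)
      by field_simp]
  rw [Complex.exp_add, Complex.exp_int_mul_two_pi_mul_I, mul_one]

lemma E_add (q : ℕ) (m n : ℤ) : E q (m + n) = E q m * E q n := by
  unfold E
  rw [← Complex.exp_add]
  congr 1
  push_cast
  ring

lemma eZ_eq (q : ℕ) (x : ZMod q) : eZ q x = E q (x.val : ℤ) := by
  simp [eZ, E]

lemma eZ_intCast (q : ℕ) [NeZero q] (n : ℤ) : eZ q ((n : ℤ) : ZMod q) = E q n := by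
  rw [eZ_eq]
  apply E_congr
  rw [← ZMod.intCast_eq_intCast_iff]
  push_cast
  rw [ZMod.natCast_zmod_val]

lemma cast_trans {d m n : ℕ} (hd : d ∣ m) (hm : m ∣ n) (x : ZMod n) :
    (ZMod.cast (ZMod.cast x : ZMod m) : ZMod d) = ZMod.cast x := by
  rw [← ZMod.castHom_apply (h := hd), ← ZMod.castHom_apply (h := hm),
      ← ZMod.castHom_apply (h := hd.trans hm), ← RingHom.comp_apply, ZMod.castHom_comp]

/-- CRT splitting of the exponential. -/
lemma E_mul_right {d₁ d₂ : ℕ} [NeZero d₁] [NeZero d₂] (n : ℤ) :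
    E (d₁ * d₂) (n * d₂) = E d₁ n := by
  have h1 : (d₁ : ℂ) ≠ 0 := Nat.cast_ne_zero.2 (NeZero.ne _)
  have h2 : (d₂ : ℂ) ≠ 0 := Nat.cast_ne_zero.2 (NeZero.ne _)
  unfold E
  congr 1
  push_cast
  field_simp

lemma E_mul_left {d₁ d₂ : ℕ} [NeZero d₁] [NeZero d₂] (n : ℤ) :
    E (d₁ * d₂) (n * d₁) = E d₂ n := by
  rw [Nat.mul_comm d₁ d₂]; exact E_mul_right n

lemma eZ_split {d₁ d₂ : ℕ} [NeZero d₁] [NeZero d₂] (h : Nat.Coprime d₁ d₂)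
    (x : ZMod (d₁ * d₂)) (β₂ : ZMod d₁) (β₁ : ZMod d₂)
    (hβ₂ : (d₂ : ZMod d₁) * β₂ = 1) (hβ₁ : (d₁ : ZMod d₂) * β₁ = 1) :
    eZ (d₁ * d₂) x = eZ d₁ ((ZMod.cast x : ZMod d₁) * β₂) * eZ d₂ ((ZMod.cast x : ZMod d₂) * β₁) := by
  haveI : NeZero (d₁ * d₂) := ⟨mul_ne_zero (NeZero.ne _) (NeZero.ne _)⟩
  have hc : IsCoprime (d₁ : ℤ) (d₂ : ℤ) := by
    rw [Int.isCoprime_iff_gcd_eq_one, Int.gcd_natCast_natCast]; exact h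
  have e0 : ((x.val : ℕ) : ZMod d₁) = (ZMod.cast x : ZMod d₁) := ZMod.natCast_val x
  have e0' : ((x.val : ℕ) : ZMod d₂) = (ZMod.cast x : ZMod d₂) := ZMod.natCast_val x
  have e1 : ((((ZMod.cast x : ZMod d₁) * β₂).val : ℕ) : ZMod d₁) = (ZMod.cast x : ZMod d₁) * β₂ :=
    ZMod.natCast_zmod_val _
  have e2 : ((((ZMod.cast x : ZMod d₂) * β₁).val : ℕ) : ZMod d₂) = (ZMod.cast x : ZMod d₂) * β₁ :=
    ZMod.natCast_zmod_val _
  have hdvd₁ : (d₁ : ℤ) ∣ (x.val : ℤ) -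
      ((((ZMod.cast x : ZMod d₁) * β₂).val : ℤ) * d₂ + (((ZMod.cast x : ZMod d₂) * β₁).val : ℤ) * d₁) := by
    rw [← ZMod.intCast_zmod_eq_zero_iff_dvd]
    push_cast [-ZMod.natCast_val]
    rw [e0, e1, ZMod.natCast_self, mul_zero, add_zero, mul_assoc, mul_comm β₂ (d₂ : ZMod d₁),
      hβ₂, mul_one, sub_self]
  have hdvd₂ : (d₂ : ℤ) ∣ (x.val : ℤ) -
      ((((ZMod.cast x : ZMod d₁) * β₂).val : ℤ) * d₂ + (((ZMod.cast x : ZMod d₂) * β₁).val : ℤ) * d₁) := by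
    rw [← ZMod.intCast_zmod_eq_zero_iff_dvd]
    push_cast [-ZMod.natCast_val]
    rw [e0', e2, ZMod.natCast_self, mul_zero, zero_add, mul_assoc,
      mul_comm β₁ (d₁ : ZMod d₂), hβ₁, mul_one, sub_self]
  have key : (x.val : ℤ) ≡ (((ZMod.cast x : ZMod d₁) * β₂).val : ℤ) * d₂ +
      (((ZMod.cast x : ZMod d₂) * β₁).val : ℤ) * d₁ [ZMOD (d₁ * d₂ : ℕ)] := by
    refine (Int.modEq_iff_dvd.mpr ?_).symm
    push_cast
    exact hc.mul_dvd hdvd₁ hdvd₂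
  rw [eZ_eq, eZ_eq, eZ_eq, E_congr key, E_add]
  congr 1
  · exact E_mul_right _
  · exact E_mul_left _


/-- The units CRT equivalence. -/
noncomputable def uCRT {d₁ d₂ : ℕ} (h : Nat.Coprime d₁ d₂) :
    (ZMod (d₁ * d₂))ˣ ≃* (ZMod d₁)ˣ × (ZMod d₂)ˣ :=
  (Units.mapEquiv (ZMod.chineseRemainder h).toMulEquiv).trans MulEquiv.prodUnits

lemma uCRT_fst {d₁ d₂ : ℕ} (h : Nat.Coprime d₁ d₂) (x : (ZMod (d₁ * d₂))ˣ) :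
    (((uCRT h x).1 : (ZMod d₁)ˣ) : ZMod d₁) = ZMod.cast (x : ZMod (d₁ * d₂)) := by
  show ((ZMod.chineseRemainder h (x : ZMod (d₁ * d₂))).1 : ZMod d₁) = _
  have : (ZMod.chineseRemainder h) (x : ZMod (d₁ * d₂)) =
      (ZMod.cast (x : ZMod (d₁ * d₂)) : ZMod d₁ × ZMod d₂) := rfl
  rw [this, Prod.fst_zmod_cast]

lemma uCRT_snd {d₁ d₂ : ℕ} (h : Nat.Coprime d₁ d₂) (x : (ZMod (d₁ * d₂))ˣ) :
    (((uCRT h x).2 : (ZMod d₂)ˣ) : ZMod d₂) = ZMod.cast (x : ZMod (d₁ * d₂)) := by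
  show ((ZMod.chineseRemainder h (x : ZMod (d₁ * d₂))).2 : ZMod d₂) = _
  have : (ZMod.chineseRemainder h) (x : ZMod (d₁ * d₂)) =
      (ZMod.cast (x : ZMod (d₁ * d₂)) : ZMod d₁ × ZMod d₂) := rfl
  rw [this, Prod.snd_zmod_cast]

lemma Kl_mul {d₁ d₂ : ℕ} [NeZero d₁] [NeZero d₂] (h : Nat.Coprime d₁ d₂)
    (A B : ZMod (d₁ * d₂)) (β₂ : ZMod d₁) (β₁ : ZMod d₂)
    (hβ₂ : (d₂ : ZMod d₁) * β₂ = 1) (hβ₁ : (d₁ : ZMod d₂) * β₁ = 1) :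
    haveI : NeZero (d₁ * d₂) := ⟨mul_ne_zero (NeZero.ne _) (NeZero.ne _)⟩
    Kl (d₁ * d₂) A B =
      Kl d₁ ((ZMod.cast A : ZMod d₁) * β₂) ((ZMod.cast B : ZMod d₁) * β₂) *
        Kl d₂ ((ZMod.cast A : ZMod d₂) * β₁) ((ZMod.cast B : ZMod d₂) * β₁) := by
  haveI : NeZero (d₁ * d₂) := ⟨mul_ne_zero (NeZero.ne _) (NeZero.ne _)⟩
  unfold Kl
  rw [Finset.sum_mul_sum, ← Fintype.sum_prod_type']
  refine Fintype.sum_equiv (uCRT h).toEquiv _ _ fun x => ?_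

  rw [eZ_split h _ β₂ β₁ hβ₂ hβ₁]
  rw [show (uCRT h).toEquiv x = (uCRT h) x from rfl]
  have hinv₁ : (((uCRT h x).1⁻¹ : (ZMod d₁)ˣ) : ZMod d₁)
      = ZMod.cast ((x⁻¹ : (ZMod (d₁*d₂))ˣ) : ZMod (d₁ * d₂)) := by
    rw [show (uCRT h x).1⁻¹ = (uCRT h x⁻¹).1 by rw [map_inv]; rfl]
    exact uCRT_fst h x⁻¹
  have hinv₂ : (((uCRT h x).2⁻¹ : (ZMod d₂)ˣ) : ZMod d₂)
      = ZMod.cast ((x⁻¹ : (ZMod (d₁*d₂))ˣ) : ZMod (d₁ * d₂)) := by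
    rw [show (uCRT h x).2⁻¹ = (uCRT h x⁻¹).2 by rw [map_inv]; rfl]
    exact uCRT_snd h x⁻¹
  congr 1
  · congr 1
    rw [ZMod.cast_add (dvd_mul_right d₁ d₂), ZMod.cast_mul (dvd_mul_right d₁ d₂),
      ZMod.cast_mul (dvd_mul_right d₁ d₂), uCRT_fst h x, hinv₁]
    ring
  · congr 1
    rw [ZMod.cast_add (dvd_mul_left d₂ d₁), ZMod.cast_mul (dvd_mul_left d₂ d₁),
      ZMod.cast_mul (dvd_mul_left d₂ d₁), uCRT_snd h x, hinv₂]
    ring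

lemma Kl_scale {d : ℕ} [NeZero d] (A B : ZMod d) (u : (ZMod d)ˣ) :
    Kl d (A * u) (B * u) = Kl d A (B * (u : ZMod d) ^ 2) := by
  unfold Kl
  refine Fintype.sum_equiv (Equiv.mulLeft u) _ _ fun y => ?_
  simp only [Equiv.coe_mulLeft]
  congr 1
  rw [mul_inv_rev]
  push_cast
  have h1 : (u : ZMod d) * ((u⁻¹ : (ZMod d)ˣ) : ZMod d) = 1 := by
    rw [← Units.val_mul, mul_inv_cancel, Units.val_one]
  calc A * (u : ZMod d) * (y : ZMod d) + B * (u : ZMod d) * ((y⁻¹ : (ZMod d)ˣ) : ZMod d)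
      = A * ((u : ZMod d) * (y : ZMod d)) +
        B * (u : ZMod d) ^ 2 * (((y⁻¹ : (ZMod d)ˣ) : ZMod d) * ((u⁻¹ : (ZMod d)ˣ) : ZMod d)) := by
        rw [show B * (u : ZMod d) ^ 2 * (((y⁻¹ : (ZMod d)ˣ) : ZMod d) * ((u⁻¹ : (ZMod d)ˣ) : ZMod d))
            = B * (u : ZMod d) * ((y⁻¹ : (ZMod d)ˣ) : ZMod d) *
              ((u : ZMod d) * ((u⁻¹ : (ZMod d)ˣ) : ZMod d)) by ring, h1, mul_one]
        ring
    _ = _ := by norm_num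

lemma Kl_split {d₁ d₂ : ℕ} [NeZero d₁] [NeZero d₂] (h : Nat.Coprime d₁ d₂)
    (A B : ZMod (d₁ * d₂)) :
    haveI : NeZero (d₁ * d₂) := ⟨mul_ne_zero (NeZero.ne _) (NeZero.ne _)⟩
    Kl (d₁ * d₂) A B =
      Kl d₁ (ZMod.cast A) ((ZMod.cast B : ZMod d₁) * ((d₂ : ZMod d₁))⁻¹ ^ 2) *
        Kl d₂ (ZMod.cast A) ((ZMod.cast B : ZMod d₂) * ((d₁ : ZMod d₂))⁻¹ ^ 2) := by
  haveI : NeZero (d₁ * d₂) := ⟨mul_ne_zero (NeZero.ne _) (NeZero.ne _)⟩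
  set u₂ : (ZMod d₁)ˣ := ZMod.unitOfCoprime d₂ h.symm with hu₂
  set u₁ : (ZMod d₂)ˣ := ZMod.unitOfCoprime d₁ h with hu₁
  have hc₂ : ((u₂ : (ZMod d₁)ˣ) : ZMod d₁) = (d₂ : ZMod d₁) := ZMod.coe_unitOfCoprime _ _
  have hc₁ : ((u₁ : (ZMod d₂)ˣ) : ZMod d₂) = (d₁ : ZMod d₂) := ZMod.coe_unitOfCoprime _ _
  have hβ₂ : (d₂ : ZMod d₁) * ((u₂⁻¹ : (ZMod d₁)ˣ) : ZMod d₁) = 1 := by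
    rw [← hc₂, ← Units.val_mul, mul_inv_cancel, Units.val_one]
  have hβ₁ : (d₁ : ZMod d₂) * ((u₁⁻¹ : (ZMod d₂)ˣ) : ZMod d₂) = 1 := by
    rw [← hc₁, ← Units.val_mul, mul_inv_cancel, Units.val_one]
  have hi₂ : ((d₂ : ZMod d₁))⁻¹ = ((u₂⁻¹ : (ZMod d₁)ˣ) : ZMod d₁) := by
    rw [← hc₂, ZMod.inv_coe_unit]
  have hi₁ : ((d₁ : ZMod d₂))⁻¹ = ((u₁⁻¹ : (ZMod d₂)ˣ) : ZMod d₂) := by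
    rw [← hc₁, ZMod.inv_coe_unit]
  rw [Kl_mul h A B _ _ hβ₂ hβ₁, hi₂, hi₁]
  congr 1
  · rw [show ((u₂⁻¹ : (ZMod d₁)ˣ) : ZMod d₁) ^ 2 = (((u₂⁻¹) ^ 2 : (ZMod d₁)ˣ) : ZMod d₁) by
      push_cast; ring]
    exact Kl_scale _ _ _
  · rw [show ((u₁⁻¹ : (ZMod d₂)ˣ) : ZMod d₂) ^ 2 = (((u₁⁻¹) ^ 2 : (ZMod d₂)ˣ) : ZMod d₂) by
      push_cast; ring]
    exact Kl_scale _ _ _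


/-- Multiplicativity of the character sum `𝔠`: if `q = q₁q₂` with `(q₁,q₂) = 1`,
`m₁ = m₁′m₁″` with `(m₁′,m₁″) = 1`, `m₁′ ∣ q₁`, `m₁″ ∣ q₂`, then
`𝔠(q₁q₂; m₂, m'₂) = 𝔠(q₁; m₂t̄², m'₂t̄²) · 𝔠(q₂; m₂s̄², m'₂s̄²)` where
`t = q₂/m₁″` is inverted mod `q₁/m₁′` and `s = q₁/m₁′` mod `q₂/m₁″`. -/
theorem CS_mul (q₁ q₂ m₁' m₁'' : ℕ) [NeZero q₁] [NeZero q₂]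
    [NeZero (q₁ / m₁')] [NeZero (q₂ / m₁'')]
    (hq : Nat.Coprime q₁ q₂) (hm : Nat.Coprime m₁' m₁'')
    (h₁ : m₁' ∣ q₁) (h₂ : m₁'' ∣ q₂) (m₂ m'₂ : ℤ) :
    CS (q₁ * q₂) ((q₁ / m₁') * (q₂ / m₁''))
        (m₂ : ZMod ((q₁ / m₁') * (q₂ / m₁''))) (m'₂ : ZMod ((q₁ / m₁') * (q₂ / m₁''))) =
      CS q₁ (q₁ / m₁')
          ((m₂ : ZMod (q₁ / m₁')) * (((q₂ / m₁'' : ℕ) : ZMod (q₁ / m₁')))⁻¹ ^ 2)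
          ((m'₂ : ZMod (q₁ / m₁')) * (((q₂ / m₁'' : ℕ) : ZMod (q₁ / m₁')))⁻¹ ^ 2) *
        CS q₂ (q₂ / m₁'')
          ((m₂ : ZMod (q₂ / m₁'')) * (((q₁ / m₁' : ℕ) : ZMod (q₂ / m₁'')))⁻¹ ^ 2)
          ((m'₂ : ZMod (q₂ / m₁'')) * (((q₁ / m₁' : ℕ) : ZMod (q₂ / m₁'')))⁻¹ ^ 2) := by
  have hd₁ : (q₁ / m₁') ∣ q₁ := Nat.div_dvd_of_dvd h₁
  have hd₂ : (q₂ / m₁'') ∣ q₂ := Nat.div_dvd_of_dvd h₂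
  have hdd : Nat.Coprime (q₁ / m₁') (q₂ / m₁'') :=
    Nat.Coprime.coprime_dvd_right hd₂ (Nat.Coprime.coprime_dvd_left hd₁ hq)
  haveI : NeZero (q₁ * q₂) := ⟨mul_ne_zero (NeZero.ne _) (NeZero.ne _)⟩
  haveI : NeZero ((q₁ / m₁') * (q₂ / m₁'')) := ⟨mul_ne_zero (NeZero.ne _) (NeZero.ne _)⟩
  unfold CS
  rw [Finset.sum_mul_sum, ← Fintype.sum_prod_type']
  refine Fintype.sum_equiv (uCRT hq).toEquiv _ _ fun a => ?_
  rw [show (uCRT hq).toEquiv a = (uCRT hq) a from rfl]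
  have hA : (ZMod.cast (ZMod.cast ((a : ZMod (q₁*q₂))) : ZMod ((q₁/m₁')*(q₂/m₁''))) : ZMod (q₁/m₁'))
      = ZMod.cast (((((uCRT hq) a).1 : (ZMod q₁)ˣ)) : ZMod q₁) := by
    rw [cast_trans (dvd_mul_right _ _) (mul_dvd_mul hd₁ hd₂), uCRT_fst hq a,
      cast_trans hd₁ (dvd_mul_right q₁ q₂)]
  have hB : (ZMod.cast (ZMod.cast ((a : ZMod (q₁*q₂))) : ZMod ((q₁/m₁')*(q₂/m₁''))) : ZMod (q₂/m₁''))
      = ZMod.cast (((((uCRT hq) a).2 : (ZMod q₂)ˣ)) : ZMod q₂) := by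
    rw [cast_trans (dvd_mul_left _ _) (mul_dvd_mul hd₁ hd₂), uCRT_snd hq a,
      cast_trans hd₂ (dvd_mul_left q₂ q₁)]
  rw [Kl_split hdd, Kl_split hdd, hA, hB]
  rw [ZMod.cast_intCast (dvd_mul_right (q₁/m₁') (q₂/m₁'')) m₂ (R := ZMod (q₁/m₁')),
    ZMod.cast_intCast (dvd_mul_right (q₁/m₁') (q₂/m₁'')) m'₂ (R := ZMod (q₁/m₁')),
    ZMod.cast_intCast (dvd_mul_left (q₂/m₁'') (q₁/m₁')) m₂ (R := ZMod (q₂/m₁'')),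
    ZMod.cast_intCast (dvd_mul_left (q₂/m₁'') (q₁/m₁')) m'₂ (R := ZMod (q₂/m₁''))]
  ring
end
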